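/- arXiv:0704.2395 — 2 statements merged into one kernel-verified Lean document; each statement's English description precedes it below -/
import Mathlib

section
/- Let η be a positive bounded function, decreasing on [0,∞), such that x ↦ η(|x|) is summable on ℝ^d. Then there exists a constant K, depending only on η and d, such that Σ_{k∈ℤ^d} η(|x+k|) η(|y+k|) ≤ K η(|x−y|/8) for all x, y ∈ ℝ^d. -/
/-!
Since `|x - y| ≤ |x + k| + |y + k|`, the larger of `|x + k|` and `|y + k|` is at least
`|x - y| / 2`, so `η(|x+k|) η(|y+k|) ≤ η(|x-y|/2) (η(|x+k|) + η(|y+k|))`, and it remains to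
bound the lattice sums `∑_k η(|x+k|)` uniformly in `x`. For `u` in the unit cell `k + [0,1)^d`
one has `|x + k| ≥ |x + u| - √d`, so such a sum is dominated by the integral of
`u ↦ η(max (|u| - √d) 0)`; this function is integrable, being bounded near the origin and at
most `η(|u|/2)` away from it.
-/

open MeasureTheory Complex Filter Finset

noncomputable section

/-- `ℝ^d`. -/
abbrev Vec (d : ℕ) := Fin d → ℝ

variable {d : ℕ}

/-- Real version of an integer matrix. -/
def MR (M : Matrix (Fin d) (Fin d) ℤ) : Matrix (Fin d) (Fin d) ℝ := M.map Int.cast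

/-- All eigenvalues of `M` are greater than 1 in modulus. -/
def Expanding (M : Matrix (Fin d) (Fin d) ℤ) : Prop :=
  ∀ z : ℂ, (Matrix.charpoly (M.map (Int.cast : ℤ → ℂ))).IsRoot z → 1 < ‖z‖

/-- `ψ_{jk}(x) = m^{j/2} ψ (M^j x + k)`, where `m = |det M|`. -/
def wave (M : Matrix (Fin d) (Fin d) ℤ) (ψ : Vec d → ℂ) (j : ℤ) (k : Fin d → ℤ)
    (x : Vec d) : ℂ :=
  (Real.sqrt ((M.det.natAbs : ℝ) ^ j) : ℝ) * ψ ((MR M ^ j).mulVec x + fun i => (k i : ℝ))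

/-- `L²` inner product of plain functions, `⟨f,g⟩ = ∫ f conj g`. -/
def ip (f g : Vec d → ℂ) : ℂ := ∫ x : Vec d, f x * (starRingEnd ℂ) (g x)

/-- Square of the `L²` norm. -/
def sqnorm (f : Vec d → ℂ) : ℝ := ∫ x : Vec d, ‖f x‖ ^ 2

/-- The Euclidean norm `|x|` on `ℝ^d`. -/
def euclNorm (x : Vec d) : ℝ := Real.sqrt (∑ i, x i ^ 2)

/-- Fourier transform `f̂(x) = ∫ f(t) e^{-2πi(t,x)} dt`. -/
def FT (f : Vec d → ℂ) (x : Vec d) : ℂ :=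
  ∫ t : Vec d, f t * Complex.exp ((-2 * Real.pi * (∑ i, t i * x i) : ℝ) * Complex.I)

/-- Partial derivative in direction `i`. -/
def pd (i : Fin d) (f : Vec d → ℂ) : Vec d → ℂ := fun x => fderiv ℝ f x (Pi.single i 1)

/-- Mixed partial derivative `D^β`. -/
def mderiv (β : Fin d → ℕ) (f : Vec d → ℂ) : Vec d → ℂ :=
  ((List.ofFn fun i : Fin d => (pd i)^[β i]).foldl (· ∘ ·) id) f

/-- `[β] = β₁ + … + β_d`. -/
def misize (β : Fin d → ℕ) : ℕ := ∑ i, β i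

/-- Multi-index binomial coefficient. -/
def mchoose (β γ : Fin d → ℕ) : ℕ := ∏ i, Nat.choose (β i) (γ i)

/-- Multi-index power `a^β` for `a ∈ ℂ^d`. -/
def cpow (a : Fin d → ℂ) (β : Fin d → ℕ) : ℂ := ∏ i, a i ^ β i

/-- `s` is a complete set of digits (coset representatives of `ℤ^d / M ℤ^d`) with `s 0 = 0`. -/
def Digits (M : Matrix (Fin d) (Fin d) ℤ) (m : ℕ) (s : Fin m → Fin d → ℤ) : Prop :=
  (∀ h : 0 < m, s ⟨0, h⟩ = 0) ∧
    ∀ l : Fin d → ℤ, ∃! k : Fin m, ∃ c : Fin d → ℤ, l = s k + M.mulVec c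

/-- The mask with the given polyphase representatives:
`m_ν(x) = m^{-1/2} ∑_k e^{2πi(s_k,x)} μ_{νk}(M* x)`. -/
def maskOf (M : Matrix (Fin d) (Fin d) ℤ) {m : ℕ} (s : Fin m → Fin d → ℤ)
    (μrow : Fin m → Vec d → ℂ) (x : Vec d) : ℂ :=
  (1 / Real.sqrt m : ℝ) * ∑ k : Fin m,
    Complex.exp ((2 * Real.pi * (∑ i, (s k i : ℝ) * x i) : ℝ) * Complex.I) *
      μrow k ((MR M).transpose.mulVec x)

/-- `(M*)⁻¹` as a real matrix. -/
def MsInv (M : Matrix (Fin d) (Fin d) ℤ) : Matrix (Fin d) (Fin d) ℝ := ((MR M).transpose)⁻¹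

/-- `M⁻¹ s` as a real vector. -/
def MinvS (M : Matrix (Fin d) (Fin d) ℤ) (sk : Fin d → ℤ) : Fin d → ℝ :=
  (MR M)⁻¹.mulVec fun i => (sk i : ℝ)

/-- The vector `-2πi M⁻¹ s_k` in `ℂ^d`. -/
def mvec (M : Matrix (Fin d) (Fin d) ℤ) (sk : Fin d → ℤ) : Fin d → ℂ :=
  fun i => (-2 * Real.pi * Complex.I) * ((MinvS M sk i : ℝ) : ℂ)

/-- Condition (0): `D^β μ₀ₖ(0) = m^{-1/2} ∑_{0≤γ≤β} λ_γ (β choose γ) (-2πi M⁻¹ s_k)^{β-γ}`. -/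
def PolyCond (M : Matrix (Fin d) (Fin d) ℤ) {m : ℕ} (s : Fin m → Fin d → ℤ)
    (lam : (Fin d → ℕ) → ℂ) (β : Fin d → ℕ) (k : Fin m) (μ0k : Vec d → ℂ) : Prop :=
  mderiv β μ0k 0 = ((1 / Real.sqrt m : ℝ) : ℂ) *
    ∑ γ ∈ Finset.Iic β, lam γ * (mchoose β γ : ℂ) * cpow (mvec M (s k)) (β - γ)

/-- 1-periodicity in each variable. -/
def Per1 (f : Vec d → ℂ) : Prop :=
  ∀ (x : Vec d) (k : Fin d → ℤ), f (x + fun i => (k i : ℝ)) = f x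

/-- The class `L_∞^{(n)}`: 1-periodic, essentially bounded, with continuous partial
derivatives up to order `n` at the origin. -/
def LinftyN (n : ℕ) (f : Vec d → ℂ) : Prop :=
  Per1 f ∧ (∃ C : ℝ, ∀ᵐ x : Vec d, ‖f x‖ ≤ C) ∧
    (∀ β : Fin d → ℕ, misize β < n → DifferentiableAt ℝ (mderiv β f) 0) ∧
    (∀ β : Fin d → ℕ, misize β ≤ n → ContinuousAt (mderiv β f) 0)

/-- Trigonometric polynomial: finite linear combination of `e^{2πi(k,x)}`, `k ∈ ℤ^d`. -/
def TrigPoly (f : Vec d → ℂ) : Prop :=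
  ∃ (S : Finset (Fin d → ℤ)) (c : (Fin d → ℤ) → ℂ), ∀ x,
    f x = ∑ k ∈ S, c k * Complex.exp ((2 * Real.pi * (∑ i, (k i : ℝ) * x i) : ℝ) * Complex.I)

/-- Partial sum `∑_{i<j} ∑_{k∈ℤ^d} ∑_ν ⟨f, ψ̃_{ik}^{(ν)}⟩ ψ_{ik}^{(ν)}(x)` of the frame
decomposition. -/
def framePartial (M : Matrix (Fin d) (Fin d) ℤ) {r : ℕ} (ψ ψt : Fin r → Vec d → ℂ)
    (f : Vec d → ℂ) (j : ℤ) (x : Vec d) : ℂ :=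
  ∑' (i : {i : ℤ // i < j}) (k : Fin d → ℤ) (ν : Fin r),
    ip f (wave M (ψt ν) i k) * wave M (ψ ν) i k x

/-- Square of the Sobolev `W₂ⁿ` norm (for a function with classical derivatives). -/
def sobNormSq (n : ℕ) (f : Vec d → ℂ) : ℝ :=
  ∑ β ∈ (Finset.Iic (fun _ : Fin d => n)).filter (fun β => misize β ≤ n),
    sqnorm (mderiv β f)


section AddHaar

variable {E : Type*} [NormedAddCommGroup E] [NormedSpace ℝ E] [FiniteDimensional ℝ E]
  [MeasurableSpace E] [BorelSpace E] (μ : Measure E) [μ.IsAddHaarMeasure]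

theorem integrable_comp_max_norm_sub {η : ℝ → ℝ} (hmono : AntitoneOn η (Set.Ici 0))
    (hnonneg : ∀ t, 0 ≤ t → 0 ≤ η t) (hint : Integrable (fun x => η ‖x‖) μ) (r : ℝ) :
    Integrable (fun x => η (max (‖x‖ - r) 0)) μ := by
  have hanti : Antitone fun t => η (max t 0) := fun a b hab =>
    hmono (le_max_right a 0) (le_max_right b 0) (max_le_max hab le_rfl)
  have hhalf : Integrable (fun x : E => η (‖x‖ / 2)) μ := by
    have := (integrable_comp_smul_iff μ (fun x => η ‖x‖) (inv_ne_zero two_ne_zero)).2 hint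
    simpa [norm_smul, div_eq_inv_mul] using this
  have hball : Integrable ((Metric.closedBall (0 : E) (2 * r)).indicator fun _ => η 0) μ :=
    (integrable_indicator_iff Metric.isClosed_closedBall.measurableSet).2
      (integrableOn_const measure_closedBall_lt_top.ne)
  refine (hball.add hhalf).mono'
    (hanti.measurable.comp (measurable_norm.sub_const r)).aestronglyMeasurable
    (ae_of_all _ fun x => ?_)
  have hx0 : 0 ≤ η (max (‖x‖ - r) 0) := hnonneg _ (le_max_right _ _)
  have hhalf0 : 0 ≤ η (‖x‖ / 2) := hnonneg _ (by positivity)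
  rw [Real.norm_of_nonneg hx0, Pi.add_apply]
  by_cases hx : x ∈ Metric.closedBall (0 : E) (2 * r)
  · rw [Set.indicator_of_mem hx]
    have : η (max (‖x‖ - r) 0) ≤ η 0 :=
      hmono Set.self_mem_Ici (le_max_right (‖x‖ - r) 0) (le_max_right _ _)
    linarith
  · rw [Set.indicator_of_notMem hx, zero_add]
    rw [Metric.mem_closedBall, dist_zero_right, not_le] at hx
    exact hmono (Set.mem_Ici.2 (by positivity)) (le_max_right (‖x‖ - r) 0)
      (le_max_of_le_left (by linarith))

end AddHaar

theorem summable_and_tsum_le_integral_of_le_on_fibers {α ι : Type*} [MeasurableSpace α]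
    [Countable ι] [MeasurableSpace ι] [MeasurableSingletonClass ι] {μ : Measure α}
    {q : α → ι} (hq : Measurable q) (hfiber : ∀ k, μ (q ⁻¹' {k}) = 1)
    {f : α → ℝ} (hf : Integrable f μ) {a : ι → ℝ} (ha : ∀ k, 0 ≤ a k)
    (hle : ∀ u, a (q u) ≤ f u) :
    Summable a ∧ ∑' k, a k ≤ ∫ u, f u ∂μ := by
  have hsum : HasSum (fun k => ∫ u in q ⁻¹' {k}, f u ∂μ) (∫ u, f u ∂μ) := by
    have := hasSum_integral_iUnion (fun k => hq (measurableSet_singleton k))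
      (pairwise_disjoint_fiber q) hf.integrableOn
    rwa [← Set.preimage_iUnion, Set.iUnion_of_singleton, Set.preimage_univ,
      setIntegral_univ] at this
  have hcell : ∀ k, a k ≤ ∫ u in q ⁻¹' {k}, f u ∂μ := fun k => by
    have := setIntegral_mono_on (integrableOn_const (by simp [hfiber])) hf.integrableOn
      (hq (measurableSet_singleton k)) fun u (hu : q u = k) => hu ▸ hle u
    simpa [measureReal_def, hfiber] using this
  have ha_sum : Summable a := hsum.summable.of_nonneg_of_le ha hcell
  exact ⟨ha_sum, hasSum_le hcell ha_sum.hasSum hsum⟩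

lemma euclNorm_eq_norm_toLp (x : Vec d) : euclNorm x = ‖WithLp.toLp 2 x‖ := by
  simp [EuclideanSpace.norm_eq, euclNorm, sq_abs]

lemma euclNorm_nonneg (x : Vec d) : 0 ≤ euclNorm x := Real.sqrt_nonneg _

lemma euclNorm_add_le (x y : Vec d) : euclNorm (x + y) ≤ euclNorm x + euclNorm y := by
  simpa only [euclNorm_eq_norm_toLp, WithLp.toLp_add] using norm_add_le _ _

lemma euclNorm_sub_le_add_add (x y z : Vec d) :
    euclNorm (x - y) ≤ euclNorm (x + z) + euclNorm (y + z) := by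
  simpa only [euclNorm_eq_norm_toLp, WithLp.toLp_sub, WithLp.toLp_add, add_sub_add_right_eq_sub]
    using norm_sub_le (WithLp.toLp 2 x + WithLp.toLp 2 z) (WithLp.toLp 2 y + WithLp.toLp 2 z)

lemma euclNorm_fract_le (u : Vec d) : euclNorm (fun i => Int.fract (u i)) ≤ Real.sqrt d := by
  refine Real.sqrt_le_sqrt ?_
  calc ∑ i, Int.fract (u i) ^ 2 ≤ ∑ _i : Fin d, (1 : ℝ) :=
        Finset.sum_le_sum fun i _ => pow_le_one₀ (Int.fract_nonneg _) (Int.fract_lt_one _).le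
    _ = d := by simp

lemma euclNorm_add_le_floor_add_sqrt (x u : Vec d) :
    euclNorm (x + u) ≤ euclNorm (x + fun i => (⌊u i⌋ : ℝ)) + Real.sqrt d := by
  have hsplit : x + u = (x + fun i => (⌊u i⌋ : ℝ)) + fun i => Int.fract (u i) := by
    ext i; simp only [Pi.add_apply, add_assoc, Int.floor_add_fract]
  rw [hsplit]
  linarith [euclNorm_add_le (x + fun i => (⌊u i⌋ : ℝ)) fun i => Int.fract (u i),
    euclNorm_fract_le u]

lemma integrable_comp_euclNorm_iff (F : ℝ → ℝ) :
    Integrable (fun x : Vec d => F (euclNorm x)) ↔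
      Integrable (fun v : EuclideanSpace ℝ (Fin d) => F ‖v‖) := by
  rw [← (PiLp.volume_preserving_ofLp (Fin d)).integrable_comp_emb
    (MeasurableEquiv.toLp 2 _).symm.measurableEmbedding]
  simp [Function.comp_def, euclNorm_eq_norm_toLp]

lemma volume_floor_preimage (k : Fin d → ℤ) :
    volume ((fun u : Vec d => fun i => ⌊u i⌋) ⁻¹' {k}) = 1 := by
  have : (fun u : Vec d => fun i => ⌊u i⌋) ⁻¹' {k} =
      Set.univ.pi fun i => Set.Ico (k i : ℝ) (k i + 1) := by
    ext u
    simp [funext_iff, Int.floor_eq_iff]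
  simp [this, Real.volume_pi_Ico]

theorem exists_lattice_sum_le {η : ℝ → ℝ} (hmono : AntitoneOn η (Set.Ici 0))
    (hnonneg : ∀ t, 0 ≤ t → 0 ≤ η t)
    (hint : Integrable (fun x : Vec d => η (euclNorm x))) :
    ∃ C : ℝ, ∀ x : Vec d,
      Summable (fun k : Fin d → ℤ => η (euclNorm (x + fun i => (k i : ℝ)))) ∧
        ∑' k : Fin d → ℤ, η (euclNorm (x + fun i => (k i : ℝ))) ≤ C := by
  set g : Vec d → ℝ := fun u => η (max (euclNorm u - Real.sqrt d) 0)
  have hg : Integrable g :=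
    (integrable_comp_euclNorm_iff fun t => η (max (t - Real.sqrt d) 0)).2 <|
      integrable_comp_max_norm_sub volume hmono hnonneg
        ((integrable_comp_euclNorm_iff η).1 hint) _
  refine ⟨∫ u, g u, fun x => ?_⟩
  rw [← integral_add_left_eq_self g x]
  refine summable_and_tsum_le_integral_of_le_on_fibers (q := fun u i => ⌊u i⌋)
    (measurable_pi_lambda _ fun i => (measurable_pi_apply i).floor)
    volume_floor_preimage (hg.comp_add_left x) (fun k => hnonneg _ (euclNorm_nonneg _))
    fun u => hmono (le_max_right (euclNorm (x + u) - Real.sqrt d) 0) (euclNorm_nonneg _)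
      (max_le (by linarith [euclNorm_add_le_floor_add_sqrt x u]) (euclNorm_nonneg _))

theorem mul_le_half_mul_add_of_antitoneOn {η : ℝ → ℝ} (hmono : AntitoneOn η (Set.Ici 0))
    (hnonneg : ∀ t, 0 ≤ t → 0 ≤ η t) {a b c : ℝ} (ha : 0 ≤ a) (hb : 0 ≤ b) (hc : 0 ≤ c)
    (habc : c ≤ a + b) : η a * η b ≤ η (c / 2) * (η a + η b) := by
  have hηa := hnonneg a ha
  have hηb := hnonneg b hb
  have hηc := hnonneg (c / 2) (by positivity)
  rcases le_total a b with hab | hab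
  · have : η b ≤ η (c / 2) := hmono (Set.mem_Ici.2 (by positivity)) hb (by linarith)
    nlinarith
  · have : η a ≤ η (c / 2) := hmono (Set.mem_Ici.2 (by positivity)) ha (by linarith)
    nlinarith

theorem tsum_mul_le_of_mul_le_mul_add {ι : Type*} {a b : ι → ℝ} {t : ℝ} (ha : Summable a)
    (hb : Summable b) (hab0 : ∀ k, 0 ≤ a k * b k) (hab : ∀ k, a k * b k ≤ t * (a k + b k)) :
    ∑' k, a k * b k ≤ t * (∑' k, a k + ∑' k, b k) := by
  have hsum : Summable fun k => t * (a k + b k) := (ha.add hb).mul_left t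
  calc ∑' k, a k * b k ≤ ∑' k, t * (a k + b k) :=
        (hsum.of_nonneg_of_le hab0 hab).tsum_le_tsum hab hsum
    _ = t * (∑' k, a k + ∑' k, b k) := by rw [tsum_mul_left, ha.tsum_add hb]

theorem statement2_general (d : ℕ) (η : ℝ → ℝ)
    (hpos : ∀ t, 0 ≤ t → 0 < η t)
    (hmono : AntitoneOn η (Set.Ici 0))
    (hint : Integrable (fun x : Vec d => η (euclNorm x)) (volume : Measure (Vec d))) :
    ∃ K : ℝ, ∀ x y : Vec d,
      (∑' k : Fin d → ℤ,
          η (euclNorm (x + fun i => (k i : ℝ))) * η (euclNorm (y + fun i => (k i : ℝ)))) ≤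
        K * η (euclNorm (x - y) / 8) := by
  have hnonneg : ∀ t, 0 ≤ t → 0 ≤ η t := fun t ht => (hpos t ht).le
  obtain ⟨C, hC⟩ := exists_lattice_sum_le hmono hnonneg hint
  refine ⟨2 * C, fun x y => ?_⟩
  have hxy := euclNorm_nonneg (x - y)
  have hprod := tsum_mul_le_of_mul_le_mul_add (hC x).1 (hC y).1
    (fun k => mul_nonneg (hnonneg _ (euclNorm_nonneg _)) (hnonneg _ (euclNorm_nonneg _)))
    fun k => mul_le_half_mul_add_of_antitoneOn hmono hnonneg (euclNorm_nonneg _)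
      (euclNorm_nonneg _) hxy (euclNorm_sub_le_add_add x y _)
  have h8 : η (euclNorm (x - y) / 2) ≤ η (euclNorm (x - y) / 8) :=
    hmono (div_nonneg hxy (by norm_num)) (div_nonneg hxy (by norm_num)) (by linarith)
  calc _ ≤ η (euclNorm (x - y) / 2) * (_ + _) := hprod
    _ ≤ η (euclNorm (x - y) / 8) * (2 * C) :=
        mul_le_mul h8 (by linarith [(hC x).2, (hC y).2])
          (add_nonneg (tsum_nonneg fun k => hnonneg _ (euclNorm_nonneg _))
            (tsum_nonneg fun k => hnonneg _ (euclNorm_nonneg _)))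
          (hnonneg _ (div_nonneg hxy (by norm_num)))
    _ = 2 * C * η (euclNorm (x - y) / 8) := mul_comm _ _

/-- If `η` is positive, bounded, decreasing on `[0,∞)` and `η(|x|)` is summable
on `ℝ^d`, then `∑_{k∈ℤ^d} η(|x+k|) η(|y+k|) ≤ K η(|x-y|/8)` for a constant `K = K(η,d)`. -/
theorem statement2 (d : ℕ) (hd : 0 < d) (η : ℝ → ℝ)
    (hpos : ∀ t, 0 ≤ t → 0 < η t)
    (hbdd : ∃ C : ℝ, ∀ t, 0 ≤ t → η t ≤ C)
    (hmono : AntitoneOn η (Set.Ici 0))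
    (hint : Integrable (fun x : Vec d => η (euclNorm x)) (volume : Measure (Vec d))) :
    ∃ K : ℝ, ∀ x y : Vec d,
      (∑' k : Fin d → ℤ,
          η (euclNorm (x + fun i => (k i : ℝ))) * η (euclNorm (y + fun i => (k i : ℝ)))) ≤
        K * η (euclNorm (x - y) / 8) :=
  statement2_general d η hpos hmono hint

end
end

section
/- Let μ_{0k}, μ̃_{0k}, k = 0,…,m, be complex-valued functions on ℝ^d with Σ_{k=0}^{m} μ_{0k}(x) · conj(μ̃_{0k}(x)) = 1 for all x. Set μ_{0,m+1} ≡ 0 and μ̃_{0,m+1} ≡ 0, and for each ν = 1,…,m+1 define μ̃_{ν,m+1} := conj(μ_{0,m+1−ν}), μ_{ν,m+1} := conj(μ̃_{0,m+1−ν}), and for k = 0,…,m: μ_{νk} := δ_{m+1−ν,k} − μ_{0k} · conj(μ̃_{0,m+1−ν}) and μ̃_{νk} := δ_{m+1−ν,k} − μ̃_{0k} · conj(μ_{0,m+1−ν}). Then the (m+2)×(m+2) matrices ℳ := {μ_{νk}}_{ν,k=0}^{m+1} and ℳ̃ := {μ̃_{νk}}_{ν,k=0}^{m+1} satisfy ℳ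 · conj(ℳ̃^T) = I_{m+2} pointwise. -/
open MeasureTheory Complex Filter Finset

noncomputable section

variable {d : ℕ}

/-! Put `a = (μ₀ₖ)_{k ≤ m}` and `b = (conj μ̃₀ₖ)_{k ≤ m}`, so that `a ⬝ b = 1`. Then
`P = 1 - b aᵀ` is idempotent with `aᵀ P = 0` and `P b = 0`. Apart from row `0`, the rows of `ℳ`
are the rows of `P` (in reversed order) bordered by the column `b`, and those of `conj ℳ̃` are the
rows of `Pᵀ` bordered by `a`. Hence `ℳ · conj ℳ̃ᵀ` has the blocks `a ⬝ b = 1`, `aᵀ P = 0`,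
`P b = 0` and `P² + b aᵀ = P + b aᵀ = 1`. -/

namespace Matrix

variable {R : Type*} [CommRing R] {ι : Type*} [Fintype ι] [DecidableEq ι]

theorem one_sub_vecMulVec_mulVec_self {u v : ι → R} (h : v ⬝ᵥ u = 1) :
    (1 - vecMulVec u v) *ᵥ u = 0 := by
  simp [sub_mulVec, vecMulVec_mulVec, h]

theorem isIdempotentElem_one_sub_vecMulVec {u v : ι → R} (h : v ⬝ᵥ u = 1) :
    IsIdempotentElem (1 - vecMulVec u v) := by
  simp [IsIdempotentElem, sub_mul, mul_sub, vecMulVec_mul_vecMulVec, h]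

end Matrix

open Matrix

section BiorthogonalExtension

variable {R : Type*} [CommRing R] {n : ℕ}

def biorthogonalExtension (a b : Fin (n + 1) → R) : Matrix (Fin (n + 2)) (Fin (n + 2)) R :=
  Matrix.of <| Fin.cons (Fin.snoc a 0) fun j => Fin.snoc ((1 - vecMulVec b a) j.rev) (b j.rev)

theorem biorthogonalExtension_mul_transpose {a b : Fin (n + 1) → R} (hab : a ⬝ᵥ b = 1) :
    biorthogonalExtension a b * (biorthogonalExtension b a)ᵀ = 1 := by
  have hba : b ⬝ᵥ a = 1 := by rwa [dotProduct_comm]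
  ext ν ρ
  rw [mul_apply, Fin.sum_univ_castSucc]
  cases ν using Fin.cases <;> cases ρ using Fin.cases
  case zero.zero => simpa [biorthogonalExtension, dotProduct] using hab
  case zero.succ j =>
    have h := congrFun (one_sub_vecMulVec_mulVec_self hba) j.rev
    simpa [biorthogonalExtension, mulVec, dotProduct, mul_comm,
      one_apply_ne (Fin.succ_ne_zero j).symm] using h
  case succ.zero i =>
    have h := congrFun (one_sub_vecMulVec_mulVec_self hab) i.rev
    simpa [biorthogonalExtension, mulVec, dotProduct] using h
  case succ.succ i j =>
    have hP : (1 - vecMulVec a b)ᵀ = 1 - vecMulVec b a := by simp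
    calc _ = ((1 - vecMulVec b a) * (1 - vecMulVec a b)ᵀ : Matrix _ _ R) i.rev j.rev
          + vecMulVec b a i.rev j.rev := by
          simp only [biorthogonalExtension, of_apply, Fin.cons_succ, Fin.snoc_castSucc,
            Fin.snoc_last, transpose_apply, mul_apply]
          rfl
      _ = (1 : Matrix (Fin (n + 2)) (Fin (n + 2)) R) i.succ j.succ := by
          rw [hP, (isIdempotentElem_one_sub_vecMulVec hab).eq]
          simp [one_apply]

theorem of_eq_biorthogonalExtension {F : Fin (n + 2) → Fin (n + 2) → R} {a b : Fin (n + 2) → R}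
    (ha : a (Fin.last _) = 0) (h0 : F 0 = a) (hlast : ∀ ν ≠ 0, F ν (Fin.last _) = b ν.rev)
    (hF : ∀ ν ≠ 0, ∀ k ≠ Fin.last _, F ν k = (if ν.rev = k then 1 else 0) - a k * b ν.rev) :
    Matrix.of F = biorthogonalExtension (fun k => a k.castSucc) (fun k => b k.castSucc) := by
  ext ν k
  cases ν using Fin.cases <;> cases k using Fin.lastCases
  case zero.last => simp [biorthogonalExtension, h0, ha]
  case zero.cast k => simp [biorthogonalExtension, h0]
  case succ.last j => simp [biorthogonalExtension, hlast _ (Fin.succ_ne_zero j), Fin.rev_succ]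
  case succ.cast j k =>
    simp [biorthogonalExtension, hF _ (Fin.succ_ne_zero j) _ (Fin.castSucc_ne_last k),
      Fin.rev_succ, one_apply, vecMulVec_apply, mul_comm]

end BiorthogonalExtension

theorem statement13_general (d m : ℕ)
    (μ0 μt0 : Fin (m + 2) → Vec d → ℂ)
    (hlast : μ0 (Fin.last (m + 1)) = 0) (hlastt : μt0 (Fin.last (m + 1)) = 0)
    (hsum : ∀ x, (∑ k, μ0 k x * (starRingEnd ℂ) (μt0 k x)) = 1)
    (E Et : Fin (m + 2) → Fin (m + 2) → Vec d → ℂ)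
    (hrow0 : E 0 = μ0) (hrow0t : Et 0 = μt0)
    -- `μ_{ν,m+1} := conj μ̃_{0,m+1-ν}`, `μ̃_{ν,m+1} := conj μ_{0,m+1-ν}`
    (hElast : ∀ ν : Fin (m + 2), ν ≠ 0 → ∀ x,
      E ν (Fin.last (m + 1)) x = (starRingEnd ℂ) (μt0 (Fin.rev ν) x))
    (hEtlast : ∀ ν : Fin (m + 2), ν ≠ 0 → ∀ x,
      Et ν (Fin.last (m + 1)) x = (starRingEnd ℂ) (μ0 (Fin.rev ν) x))
    -- `μ_{νk} := δ_{m+1-ν,k} - μ₀ₖ conj μ̃_{0,m+1-ν}`, `μ̃_{νk} := δ_{m+1-ν,k} - μ̃₀ₖ conj μ_{0,m+1-ν}`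
    (hE : ∀ ν : Fin (m + 2), ν ≠ 0 → ∀ k : Fin (m + 2), k ≠ Fin.last (m + 1) → ∀ x,
      E ν k x = (if Fin.rev ν = k then 1 else 0) - μ0 k x * (starRingEnd ℂ) (μt0 (Fin.rev ν) x))
    (hEt : ∀ ν : Fin (m + 2), ν ≠ 0 → ∀ k : Fin (m + 2), k ≠ Fin.last (m + 1) → ∀ x,
      Et ν k x = (if Fin.rev ν = k then 1 else 0) -
        μt0 k x * (starRingEnd ℂ) (μ0 (Fin.rev ν) x)) :
    ∀ x : Vec d, ∀ ν ρ : Fin (m + 2),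
      (∑ k, E ν k x * (starRingEnd ℂ) (Et ρ k x)) = if ν = ρ then 1 else 0 := by
  intro x ν ρ
  set a : Fin (m + 2) → ℂ := fun k => μ0 k x
  set b : Fin (m + 2) → ℂ := fun k => starRingEnd ℂ (μt0 k x)
  have hE' : Matrix.of (fun ν k => E ν k x) =
      biorthogonalExtension (fun k => a k.castSucc) (fun k => b k.castSucc) :=
    of_eq_biorthogonalExtension (by simp [a, hlast]) (by simp [a, hrow0])
      (fun ν hν => hElast ν hν x) (fun ν hν k hk => hE ν hν k hk x)
  have hEt' : Matrix.of (fun ν k => starRingEnd ℂ (Et ν k x)) =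
      biorthogonalExtension (fun k => b k.castSucc) (fun k => a k.castSucc) :=
    of_eq_biorthogonalExtension (by simp [b, hlastt]) (by simp [b, hrow0t])
      (fun ν hν => by simp [a, hEtlast ν hν x])
      (fun ν hν k hk => by simp [a, b, hEt ν hν k hk x, apply_ite])
  have hab : (fun k : Fin (m + 1) => a k.castSucc) ⬝ᵥ (fun k => b k.castSucc) = 1 := by
    simpa [dotProduct, Fin.sum_univ_castSucc, a, hlast] using hsum x
  calc ∑ k, E ν k x * starRingEnd ℂ (Et ρ k x)
      = (Matrix.of (fun ν k => E ν k x) *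
          (Matrix.of fun ν k => starRingEnd ℂ (Et ν k x))ᵀ) ν ρ := by
        simp [mul_apply]
    _ = (1 : Matrix (Fin (m + 2)) (Fin (m + 2)) ℂ) ν ρ := by
        rw [hE', hEt', biorthogonalExtension_mul_transpose hab]
    _ = _ := one_apply

/-- The explicit extension of a biorthogonal pair of rows
`(μ₀₀,…,μ₀ₘ,0)`, `(μ̃₀₀,…,μ̃₀ₘ,0)` to biorthogonal `(m+2)×(m+2)` matrices. -/
theorem statement13 (d m : ℕ) (hm : 0 < m)
    (μ0 μt0 : Fin (m + 2) → Vec d → ℂ)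
    (hlast : μ0 (Fin.last (m + 1)) = 0) (hlastt : μt0 (Fin.last (m + 1)) = 0)
    (hsum : ∀ x, (∑ k, μ0 k x * (starRingEnd ℂ) (μt0 k x)) = 1)
    (E Et : Fin (m + 2) → Fin (m + 2) → Vec d → ℂ)
    (hrow0 : E 0 = μ0) (hrow0t : Et 0 = μt0)
    -- `μ_{ν,m+1} := conj μ̃_{0,m+1-ν}`, `μ̃_{ν,m+1} := conj μ_{0,m+1-ν}`
    (hElast : ∀ ν : Fin (m + 2), ν ≠ 0 → ∀ x,
      E ν (Fin.last (m + 1)) x = (starRingEnd ℂ) (μt0 (Fin.rev ν) x))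
    (hEtlast : ∀ ν : Fin (m + 2), ν ≠ 0 → ∀ x,
      Et ν (Fin.last (m + 1)) x = (starRingEnd ℂ) (μ0 (Fin.rev ν) x))
    -- `μ_{νk} := δ_{m+1-ν,k} - μ₀ₖ conj μ̃_{0,m+1-ν}`, `μ̃_{νk} := δ_{m+1-ν,k} - μ̃₀ₖ conj μ_{0,m+1-ν}`
    (hE : ∀ ν : Fin (m + 2), ν ≠ 0 → ∀ k : Fin (m + 2), k ≠ Fin.last (m + 1) → ∀ x,
      E ν k x = (if Fin.rev ν = k then 1 else 0) - μ0 k x * (starRingEnd ℂ) (μt0 (Fin.rev ν) x))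
    (hEt : ∀ ν : Fin (m + 2), ν ≠ 0 → ∀ k : Fin (m + 2), k ≠ Fin.last (m + 1) → ∀ x,
      Et ν k x = (if Fin.rev ν = k then 1 else 0) -
        μt0 k x * (starRingEnd ℂ) (μ0 (Fin.rev ν) x)) :
    ∀ x : Vec d, ∀ ν ρ : Fin (m + 2),
      (∑ k, E ν k x * (starRingEnd ℂ) (Et ρ k x)) = if ν = ρ then 1 else 0 :=
  statement13_general d m μ0 μt0 hlast hlastt hsum E Et hrow0 hrow0t hElast hEtlast hE hEt

end
end
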